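/- arXiv:2207.00602 — 2 statements merged into one kernel-verified Lean document; each statement's English description precedes it below -/
import Mathlib

section
/- The random dynamical system of the embedded birth-death chain partially synchronizes with respect to the parity partition {W₀, W₁} of ℕ, where W₀ is the set of even and W₁ the set of odd natural numbers: for every x, y in the same Wᵢ (i ∈ {0,1}) and ℙ-a.e. q ∈ Q₊ there exists n₀ ∈ ℕ such that φⁿ_q(x) = φⁿ_q(y) for all n ≥ n₀. -/
open MeasureTheory ProbabilityTheory Filter

/-- The birth-death transition map. -/
noncomputable def bdStep (γ₁ γ₂ : ℝ) (q : ℝ) (x : ℕ) : ℕ :=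
  if q < γ₁ / (γ₁ + γ₂ * x) then x + 1 else x - 1

/-- The cocycle of the embedded birth-death chain. -/
noncomputable def bdCocycle (γ₁ γ₂ : ℝ) (q : ℕ → ℝ) : ℕ → ℕ → ℕ
  | 0, x => x
  | n + 1, x => bdStep γ₁ γ₂ (q n) (bdCocycle γ₁ γ₂ q n x)

/-!
Almost surely every noise value is `< 1`, so every step of the chain changes the parity of the state
and two trajectories of equal parity stay ordered with a non-increasing gap. Since the birth
probability `γ₁ / (γ₁ + γ₂ x)` tends to `0`, above a large level `M` a birth needs a noise below
`birthProb M < 1/4`; by the strong law of large numbers such noises have frequency `< 1/4`, so the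
lower trajectory returns below `M` infinitely often. After such a return, `L = M + (y - x)`
consecutive noises `≥ birthProb 1` force deaths until both trajectories sit in `{0, 1}`, where equal
parity makes them equal, and they agree forever after. Each such run has probability
`(1 - birthProb 1) ^ L > 0` and is independent of the past, so by Lévy's upward theorem one of them
almost surely occurs.
-/

open MeasurableSpace Topology

theorem ae_condExp_indicator_le_of_disjoint {Ω : Type*} {m m0 : MeasurableSpace Ω}
    {μ : Measure Ω} [IsProbabilityMeasure μ] (hm : m ≤ m0) {A B E : Set Ω}
    (hA : MeasurableSet[m] A) (hB : MeasurableSet B) (hE : MeasurableSet E)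
    (hindep : Indep (generateFrom {B}) m μ) (hdisj : Disjoint E (A ∩ B)) :
    ∀ᵐ ω ∂μ, ω ∈ A → μ[E.indicator (fun _ => (1 : ℝ)) | m] ω ≤ 1 - μ.real B := by
  set g := E.indicator fun _ => (1 : ℝ)
  set h := Bᶜ.indicator fun _ => (1 : ℝ)
  have hg : Integrable g μ := (integrable_const 1).indicator hE
  have hh : Integrable h μ := (integrable_const 1).indicator hB.compl
  have hgh : A.indicator g ≤ A.indicator h := by
    simp only [g, h, Set.indicator_indicator]
    exact Set.indicator_le_indicator_of_subset
      (fun ω hω => ⟨hω.1, fun hωB => Set.disjoint_left.1 hdisj hω.2 ⟨hω.1, hωB⟩⟩)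
      fun _ => zero_le_one
  have hmean : μ[h] = 1 - μ.real B := by
    rw [integral_indicator_const _ hB.compl, measureReal_compl hB, probReal_univ, smul_eq_mul,
      mul_one]
  filter_upwards [condExp_indicator hg hA, condExp_indicator hh hA,
    condExp_mono (hg.indicator (hm _ hA)) (hh.indicator (hm _ hA)) (ae_of_all _ hgh),
    condExp_indep_eq (m₁ := generateFrom {B}) (f := h)
      (generateFrom_le fun s hs => Set.mem_singleton_iff.1 hs ▸ hB) hm
      (stronglyMeasurable_const.indicator (measurableSet_generateFrom (Set.mem_singleton B)).compl)
      hindep]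
    with ω hg_ind hh_ind hmono hindep_eq hωA
  calc μ[g | m] ω = μ[A.indicator g | m] ω := by rw [hg_ind, Set.indicator_of_mem hωA]
    _ ≤ μ[A.indicator h | m] ω := hmono
    _ = μ[h | m] ω := by rw [hh_ind, Set.indicator_of_mem hωA]
    _ = 1 - μ.real B := hindep_eq.trans hmean

theorem ae_exists_mem_inter_of_frequently {Ω : Type*} {m0 : MeasurableSpace Ω} {μ : Measure Ω}
    [IsProbabilityMeasure μ] (ℱ : Filtration ℕ m0) {A B : ℕ → Set Ω} {δ : ℝ} (hδ : 0 < δ)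
    (hA : ∀ t, MeasurableSet[ℱ t] (A t)) (hB : ∀ t, MeasurableSet[⨆ n, ℱ n] (B t))
    (hindep : ∀ t, Indep (generateFrom {B t}) (ℱ t) μ) (hδB : ∀ t, δ ≤ μ.real (B t))
    (hfreq : ∀ᵐ ω ∂μ, ∃ᶠ t in atTop, ω ∈ A t) :
    ∀ᵐ ω ∂μ, ∃ t, ω ∈ A t ∩ B t := by
  have hle : ⨆ n, ℱ n ≤ m0 := iSup_le ℱ.le
  set E := ⋂ t, (A t ∩ B t)ᶜ
  have hE : MeasurableSet[⨆ n, ℱ n] E :=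
    .iInter fun t => ((le_iSup (fun n => ℱ n) t _ (hA t)).inter (hB t)).compl
  have hbound (t : ℕ) := ae_condExp_indicator_le_of_disjoint (ℱ.le t) (hA t) (hle _ (hB t))
    (hle _ hE) (hindep t) (Set.disjoint_left.2 fun ω hω => Set.mem_iInter.1 hω t)
  -- Lévy's upward theorem: `P[E | ℱ t] → 𝟙_E`, while `P[E | ℱ t] ≤ 1 - δ` whenever `A t` occurs.
  filter_upwards [((integrable_const 1).indicator (hle _ hE)).tendsto_ae_condExp
    (stronglyMeasurable_const.indicator hE), hfreq, ae_all_iff.2 hbound] with ω hlim hωA hω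
  by_contra hmem
  have hωE : ω ∈ E := Set.mem_iInter.2 fun t hωt => hmem ⟨t, hωt⟩
  rw [Set.indicator_of_mem hωE] at hlim
  obtain ⟨t, hAt, hlt⟩ :=
    (hωA.and_eventually (hlim.eventually (lt_mem_nhds (show 1 - δ < 1 by linarith)))).exists
  linarith [hω t hAt, hδB t]

namespace BirthDeath

open scoped Finset

noncomputable def birthProb (γ₁ γ₂ : ℝ) (x : ℕ) : ℝ := γ₁ / (γ₁ + γ₂ * x)

def largeRun (c : ℝ) (t L : ℕ) : Set (ℕ → ℝ) := {q | ∀ j < L, c ≤ q (t + j)}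

variable {γ₁ γ₂ : ℝ}

lemma birthProb_zero (hγ₁ : γ₁ ≠ 0) : birthProb γ₁ γ₂ 0 = 1 := by
  simp [birthProb, hγ₁]

lemma birthProb_pos (hγ₁ : 0 < γ₁) (hγ₂ : 0 ≤ γ₂) (x : ℕ) : 0 < birthProb γ₁ γ₂ x := by
  unfold birthProb; positivity

lemma birthProb_antitone (hγ₁ : 0 < γ₁) (hγ₂ : 0 ≤ γ₂) : Antitone (birthProb γ₁ γ₂) :=
  fun a b hab => by unfold birthProb; gcongr

lemma birthProb_one_lt_one (hγ₁ : 0 < γ₁) (hγ₂ : 0 < γ₂) : birthProb γ₁ γ₂ 1 < 1 := by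
  rw [birthProb, div_lt_one (by positivity)]
  simpa using hγ₂

lemma exists_birthProb_lt (hγ₁ : 0 < γ₁) (hγ₂ : 0 < γ₂) {ε : ℝ} (hε : 0 < ε) :
    ∃ M, birthProb γ₁ γ₂ M < ε := by
  obtain ⟨M, hM⟩ := exists_nat_gt (γ₁ / (γ₂ * ε))
  have hM0 : (0 : ℝ) < M := lt_trans (by positivity) hM
  refine ⟨M, ?_⟩
  rw [div_lt_iff₀ (by positivity)] at hM
  calc birthProb γ₁ γ₂ M ≤ γ₁ / (γ₂ * M) := by unfold birthProb; gcongr; linarith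
    _ < ε := by rw [div_lt_iff₀ (by positivity)]; linarith

lemma ne_zero_of_birthProb_le (hγ₁ : γ₁ ≠ 0) {q : ℝ} (hq : q < 1) {x : ℕ}
    (h : birthProb γ₁ γ₂ x ≤ q) : x ≠ 0 := by
  rintro rfl
  rw [birthProb_zero hγ₁] at h
  linarith

lemma bdStep_of_lt {q : ℝ} {x : ℕ} (h : q < birthProb γ₁ γ₂ x) : bdStep γ₁ γ₂ q x = x + 1 :=
  if_pos h

lemma bdStep_of_le {q : ℝ} {x : ℕ} (h : birthProb γ₁ γ₂ x ≤ q) : bdStep γ₁ γ₂ q x = x - 1 :=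
  if_neg h.not_gt

lemma bdCocycle_succ (q : ℕ → ℝ) (n x : ℕ) :
    bdCocycle γ₁ γ₂ q (n + 1) x = bdStep γ₁ γ₂ (q n) (bdCocycle γ₁ γ₂ q n x) := rfl

lemma bdStep_mod_two (hγ₁ : γ₁ ≠ 0) {q : ℝ} (hq : q < 1) (x : ℕ) :
    bdStep γ₁ γ₂ q x % 2 = (x + 1) % 2 := by
  rcases lt_or_ge q (birthProb γ₁ γ₂ x) with h | h
  · rw [bdStep_of_lt h]
  · have := ne_zero_of_birthProb_le hγ₁ hq h
    rw [bdStep_of_le h]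
    omega

lemma bdCocycle_mod_two (hγ₁ : γ₁ ≠ 0) {q : ℕ → ℝ} (hq : ∀ k, q k < 1) (n x : ℕ) :
    bdCocycle γ₁ γ₂ q n x % 2 = (x + n) % 2 := by
  induction n with
  | zero => rfl
  | succ n ih => rw [bdCocycle_succ, bdStep_mod_two hγ₁ (hq n)]; omega

lemma bdStep_le_bdStep (hγ₁ : 0 < γ₁) (hγ₂ : 0 ≤ γ₂) {q : ℝ} (hq : q < 1) {a b : ℕ}
    (hab : a ≤ b) (hpar : a % 2 = b % 2) :
    bdStep γ₁ γ₂ q a ≤ bdStep γ₁ γ₂ q b ∧ bdStep γ₁ γ₂ q b - bdStep γ₁ γ₂ q a ≤ b - a := by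
  obtain rfl | hlt := hab.eq_or_lt
  · simp
  rcases lt_or_ge q (birthProb γ₁ γ₂ b) with hb | hb
  · rw [bdStep_of_lt hb, bdStep_of_lt (hb.trans_le (birthProb_antitone hγ₁ hγ₂ hab))]
    omega
  rw [bdStep_of_le hb]
  rcases lt_or_ge q (birthProb γ₁ γ₂ a) with ha | ha
  · rw [bdStep_of_lt ha]
    omega
  · have := ne_zero_of_birthProb_le hγ₁.ne' hq ha
    rw [bdStep_of_le ha]
    omega

lemma bdCocycle_le_bdCocycle (hγ₁ : 0 < γ₁) (hγ₂ : 0 ≤ γ₂) {q : ℕ → ℝ} (hq : ∀ k, q k < 1)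
    {x y : ℕ} (hxy : x ≤ y) (hpar : x % 2 = y % 2) (n : ℕ) :
    bdCocycle γ₁ γ₂ q n x ≤ bdCocycle γ₁ γ₂ q n y ∧
      bdCocycle γ₁ γ₂ q n y - bdCocycle γ₁ γ₂ q n x ≤ y - x := by
  induction n with
  | zero => exact ⟨hxy, le_rfl⟩
  | succ n ih =>
    have hparn : bdCocycle γ₁ γ₂ q n x % 2 = bdCocycle γ₁ γ₂ q n y % 2 := by
      rw [bdCocycle_mod_two hγ₁.ne' hq, bdCocycle_mod_two hγ₁.ne' hq]
      omega
    obtain ⟨hle, hgap⟩ := bdStep_le_bdStep hγ₁ hγ₂ (hq n) ih.1 hparn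
    exact ⟨hle, hgap.trans ih.2⟩

lemma bdCocycle_add_le_of_mem_largeRun (hγ₁ : 0 < γ₁) (hγ₂ : 0 ≤ γ₂) {q : ℕ → ℝ} {t J : ℕ}
    (hrun : q ∈ largeRun (birthProb γ₁ γ₂ 1) t J) (x : ℕ) {j : ℕ} (hj : j ≤ J) :
    bdCocycle γ₁ γ₂ q (t + j) x ≤ max (bdCocycle γ₁ γ₂ q t x - j) 1 := by
  induction j with
  | zero => simp
  | succ j ih =>
    rw [← add_assoc, bdCocycle_succ]
    obtain hz | hz := Nat.eq_zero_or_pos (bdCocycle γ₁ γ₂ q (t + j) x)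
    · rw [hz]
      unfold bdStep
      split_ifs <;> simp
    · rw [bdStep_of_le ((birthProb_antitone hγ₁ hγ₂ hz).trans (hrun j hj))]
      have := ih (by omega)
      omega

lemma bdCocycle_add_eq_of_mem_largeRun (hγ₁ : 0 < γ₁) (hγ₂ : 0 ≤ γ₂) {q : ℕ → ℝ}
    (hq : ∀ k, q k < 1) {t J x y : ℕ} (hpar : x % 2 = y % 2)
    (hrun : q ∈ largeRun (birthProb γ₁ γ₂ 1) t J)
    (hx : bdCocycle γ₁ γ₂ q t x ≤ J) (hy : bdCocycle γ₁ γ₂ q t y ≤ J) :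
    bdCocycle γ₁ γ₂ q (t + J) x = bdCocycle γ₁ γ₂ q (t + J) y := by
  have hx' := bdCocycle_add_le_of_mem_largeRun hγ₁ hγ₂ hrun x le_rfl
  have hy' := bdCocycle_add_le_of_mem_largeRun hγ₁ hγ₂ hrun y le_rfl
  have hpx := bdCocycle_mod_two (γ₂ := γ₂) hγ₁.ne' hq (t + J) x
  have hpy := bdCocycle_mod_two (γ₂ := γ₂) hγ₁.ne' hq (t + J) y
  omega

lemma bdCocycle_eq_of_le {q : ℕ → ℝ} {x y n m : ℕ}
    (h : bdCocycle γ₁ γ₂ q n x = bdCocycle γ₁ γ₂ q n y) (hnm : n ≤ m) :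
    bdCocycle γ₁ γ₂ q m x = bdCocycle γ₁ γ₂ q m y := by
  induction m, hnm using Nat.le_induction with
  | base => exact h
  | succ m _ ih => rw [bdCocycle_succ, bdCocycle_succ, ih]

lemma frequently_bdCocycle_le (hγ₁ : 0 < γ₁) (hγ₂ : 0 ≤ γ₂) {q : ℕ → ℝ} {M : ℕ}
    (hcount : ∀ᶠ n in atTop, 4 * #{k ∈ Finset.range n | q k < birthProb γ₁ γ₂ M} ≤ n) (x : ℕ) :
    ∃ᶠ n in atTop, bdCocycle γ₁ γ₂ q n x ≤ M := by
  set count := fun n => #{k ∈ Finset.range n | q k < birthProb γ₁ γ₂ M}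
  have count_succ (n : ℕ) :
      count (n + 1) = count n + if q n < birthProb γ₁ γ₂ M then 1 else 0 := by
    simp only [count, Finset.card_filter, Finset.sum_range_succ]
  intro hhigh
  obtain ⟨N, hN⟩ := eventually_atTop.1 (hcount.and hhigh)
  simp only [not_le] at hN
  -- Above `M`, a birth needs a noise below `birthProb M`.
  have hdrift (m : ℕ) : bdCocycle γ₁ γ₂ q (N + m) x + m + 2 * count N ≤
      bdCocycle γ₁ γ₂ q N x + 2 * count (N + m) := by
    induction m with
    | zero => simp
    | succ m ih =>
      have hM := (hN (N + m) (by omega)).2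
      rw [← Nat.add_assoc N m 1, bdCocycle_succ, count_succ]
      rcases lt_or_ge (q (N + m)) (birthProb γ₁ γ₂ (bdCocycle γ₁ γ₂ q (N + m) x)) with h | h
      · rw [bdStep_of_lt h, if_pos (h.trans_le (birthProb_antitone hγ₁ hγ₂ hM.le))]
        omega
      · rw [bdStep_of_le h]
        split_ifs <;> omega
  set m := 2 * bdCocycle γ₁ γ₂ q N x + N + 1
  have hcount_m : 4 * count (N + m) ≤ N + m := (hN (N + m) (by omega)).1
  have := hdrift m
  omega

section Noise

variable {P : Measure (ℕ → ℝ)}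

lemma measure_preimage_eval
    (hUnif : ∀ n : ℕ, P.map (fun q => q n) = volume.restrict (Set.Icc (0 : ℝ) 1))
    (n : ℕ) {s : Set ℝ} (hs : MeasurableSet s) :
    P ((fun q => q n) ⁻¹' s) = volume (s ∩ Set.Icc 0 1) := by
  rw [← Measure.map_apply (measurable_pi_apply n) hs, hUnif n, Measure.restrict_apply hs]

lemma ae_forall_lt_one
    (hUnif : ∀ n : ℕ, P.map (fun q => q n) = volume.restrict (Set.Icc (0 : ℝ) 1)) :
    ∀ᵐ q ∂P, ∀ n, q n < 1 := by
  refine ae_all_iff.2 fun n => measure_mono_null (fun q (hq : ¬ q n < 1) => not_lt.1 hq)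
    ((measure_preimage_eval hUnif n (measurableSet_Ici (a := 1))).trans ?_)
  exact measure_mono_null (fun r hr => le_antisymm hr.2.2 hr.1) (Real.volume_singleton (a := 1))

lemma ae_tendsto_card_filter_lt_div [IsProbabilityMeasure P]
    (hIndep : iIndepFun (fun n (q : ℕ → ℝ) => q n) P)
    (hUnif : ∀ n : ℕ, P.map (fun q => q n) = volume.restrict (Set.Icc (0 : ℝ) 1))
    {ε : ℝ} (hε0 : 0 ≤ ε) (hε1 : ε ≤ 1) :
    ∀ᵐ q ∂P, Tendsto (fun n : ℕ => (#{k ∈ Finset.range n | q k < ε} : ℝ) / n) atTop (𝓝 ε) := by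
  set g : ℝ → ℝ := (Set.Iio ε).indicator 1
  have hg : Measurable g := measurable_one.indicator measurableSet_Iio
  have hint : Integrable (fun q : ℕ → ℝ => g (q 0)) P :=
    (integrable_const (1 : ℝ)).mono' (hg.comp (measurable_pi_apply 0)).aestronglyMeasurable
      (ae_of_all _ fun q => (norm_indicator_le_norm_self 1 (q 0)).trans (by simp))
  have hIio : Set.Iio ε ∩ Set.Icc 0 1 = Set.Ico 0 ε := by
    ext r
    simp only [Set.mem_inter_iff, Set.mem_Iio, Set.mem_Icc, Set.mem_Ico]
    grind
  have hmean : P[fun q => g (q 0)] = ε := by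
    rw [← integral_map (measurable_pi_apply 0).aemeasurable hg.aestronglyMeasurable, hUnif 0,
      integral_indicator_one measurableSet_Iio, measureReal_restrict_apply measurableSet_Iio, hIio]
    simp [hε0]
  have hindep : Pairwise fun i j => IndepFun (fun q : ℕ → ℝ => g (q i)) (fun q => g (q j)) P :=
    fun i j hij => (hIndep.indepFun hij).comp hg hg
  have hident (i : ℕ) : IdentDistrib (fun q : ℕ → ℝ => g (q i)) (fun q => g (q 0)) P P :=
    (IdentDistrib.mk (measurable_pi_apply i).aemeasurable (measurable_pi_apply 0).aemeasurable
      ((hUnif i).trans (hUnif 0).symm)).comp hg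
  filter_upwards [strong_law_ae_real (fun i q => g (q i)) hint hindep hident] with q hq
  rw [hmean] at hq
  convert hq using 3 with n
  simp [g, Set.indicator, Finset.sum_boole]

lemma ae_eventually_four_mul_card_filter_lt_le [IsProbabilityMeasure P]
    (hIndep : iIndepFun (fun n (q : ℕ → ℝ) => q n) P)
    (hUnif : ∀ n : ℕ, P.map (fun q => q n) = volume.restrict (Set.Icc (0 : ℝ) 1))
    {ε : ℝ} (hε0 : 0 ≤ ε) (hε : ε < 1 / 4) :
    ∀ᵐ q ∂P, ∀ᶠ n in atTop, 4 * #{k ∈ Finset.range n | q k < ε} ≤ n := by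
  filter_upwards [ae_tendsto_card_filter_lt_div hIndep hUnif hε0 (by linarith)] with q hq
  filter_upwards [hq.eventually_lt_const hε, eventually_gt_atTop 0] with n hn hn0
  rw [div_lt_iff₀ (by exact_mod_cast hn0)] at hn
  exact_mod_cast (by linarith : (4 * #{k ∈ Finset.range n | q k < ε} : ℝ) ≤ n)

lemma measureReal_largeRun
    (hIndep : iIndepFun (fun n (q : ℕ → ℝ) => q n) P)
    (hUnif : ∀ n : ℕ, P.map (fun q => q n) = volume.restrict (Set.Icc (0 : ℝ) 1))
    {c : ℝ} (hc0 : 0 ≤ c) (hc1 : c ≤ 1) (t L : ℕ) :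
    P.real (largeRun c t L) = (1 - c) ^ L := by
  have hrun : largeRun c t L = ⋂ i ∈ Finset.Ico t (t + L), (fun q => q i) ⁻¹' Set.Ici c := by
    ext q
    simp only [largeRun, Set.mem_ofPred_eq, Set.mem_iInter, Finset.mem_Ico, Set.mem_preimage,
      Set.mem_Ici]
    refine ⟨fun h i hi => ?_, fun h j hj => h (t + j) (by omega)⟩
    simpa [Nat.add_sub_cancel' hi.1] using h (i - t) (by omega)
  have hIci : Set.Ici c ∩ Set.Icc 0 1 = Set.Icc c 1 := by
    ext r
    simp only [Set.mem_inter_iff, Set.mem_Ici, Set.mem_Icc]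
    grind
  have hcoord (i : ℕ) : P ((fun q => q i) ⁻¹' Set.Ici c) = ENNReal.ofReal (1 - c) := by
    rw [measure_preimage_eval hUnif i measurableSet_Ici, hIci, Real.volume_Icc]
  rw [measureReal_def, hrun, hIndep.measure_inter_preimage_eq_mul _ fun i _ => measurableSet_Ici,
    Finset.prod_congr rfl fun i _ => hcoord i, Finset.prod_const, Nat.card_Ico,
    Nat.add_sub_cancel_left, ENNReal.toReal_pow, ENNReal.toReal_ofReal (by linarith)]

end Noise

noncomputable def noiseFiltration : Filtration ℕ (MeasurableSpace.pi : MeasurableSpace (ℕ → ℝ)) :=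
  Filtration.natural (fun n q => q n) fun n => (measurable_pi_apply n).stronglyMeasurable

lemma measurable_eval_noiseFiltration {i n : ℕ} (h : i ≤ n) :
    Measurable[noiseFiltration n] fun q : ℕ → ℝ => q i :=
  Measurable.of_comap_le (le_iSup₂ (f := fun j (_ : j ≤ n) =>
    MeasurableSpace.comap (fun q : ℕ → ℝ => q j) inferInstance) i h)

lemma measurable_bdStep_uncurry : Measurable fun p : ℝ × ℕ => bdStep γ₁ γ₂ p.1 p.2 :=
  measurable_from_prod_countable_left fun n =>
    Measurable.ite (measurableSet_Iio (a := birthProb γ₁ γ₂ n))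
      (measurable_const (a := n + 1)) (measurable_const (a := n - 1))

lemma measurable_bdCocycle_succ (t x : ℕ) :
    Measurable[noiseFiltration t] fun q => bdCocycle γ₁ γ₂ q (t + 1) x := by
  induction t with
  | zero =>
    exact measurable_bdStep_uncurry.comp
      ((measurable_eval_noiseFiltration le_rfl).prodMk measurable_const)
  | succ t ih =>
    exact measurable_bdStep_uncurry.comp ((measurable_eval_noiseFiltration le_rfl).prodMk
      (ih.mono (noiseFiltration.mono t.le_succ) le_rfl))

lemma measurableSet_largeRun {m : MeasurableSpace (ℕ → ℝ)} {c : ℝ} {t L : ℕ}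
    (h : ∀ j < L, Measurable[m] fun q : ℕ → ℝ => q (t + j)) :
    MeasurableSet[m] (largeRun c t L) := by
  have hrun : largeRun c t L = ⋂ j, ⋂ (_ : j < L), {q | c ≤ q (t + j)} := by
    ext q; simp [largeRun]
  rw [hrun]
  exact .iInter fun j => .iInter fun hj => measurableSet_le measurable_const (h j hj)

lemma indep_largeRun_noiseFiltration {P : Measure (ℕ → ℝ)}
    (hIndep : iIndepFun (fun n (q : ℕ → ℝ) => q n) P) (c : ℝ) (t L : ℕ) :
    Indep (generateFrom {largeRun c (t + 1) L}) (noiseFiltration t) P := by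
  set m : ℕ → MeasurableSpace (ℕ → ℝ) := fun i =>
    MeasurableSpace.comap (fun q => q i) inferInstance
  have hfuture : Indep (⨆ i ∈ Set.Ioi t, m i) (⨆ i ∈ Set.Iic t, m i) P :=
    indep_iSup_of_disjoint (fun i => (measurable_pi_apply i).comap_le)
      ((iIndepFun_iff_iIndep _ _ _).1 hIndep) (Set.Iic_disjoint_Ioi le_rfl).symm
  refine indep_of_indep_of_le_left hfuture (generateFrom_le fun s hs => ?_)
  rw [Set.mem_singleton_iff.1 hs]
  exact measurableSet_largeRun fun j _ => Measurable.of_comap_le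
    (le_iSup₂ (f := fun i (_ : i ∈ Set.Ioi t) => m i) (t + 1 + j) (by simp; omega))

theorem ae_eventually_bdCocycle_eq_of_le (hγ₁ : 0 < γ₁) (hγ₂ : 0 < γ₂)
    {P : Measure (ℕ → ℝ)} [IsProbabilityMeasure P]
    (hIndep : iIndepFun (fun n (q : ℕ → ℝ) => q n) P)
    (hUnif : ∀ n : ℕ, P.map (fun q => q n) = volume.restrict (Set.Icc (0 : ℝ) 1))
    {x y : ℕ} (hxy : x ≤ y) (hpar : x % 2 = y % 2) :
    ∀ᵐ q ∂P, ∃ n₀ : ℕ, ∀ n ≥ n₀, bdCocycle γ₁ γ₂ q n x = bdCocycle γ₁ γ₂ q n y := by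
  obtain ⟨M, hM⟩ := exists_birthProb_lt hγ₁ hγ₂ (by norm_num : (0 : ℝ) < 1 / 4)
  set c := birthProb γ₁ γ₂ 1
  set L := M + (y - x)
  have hc0 : 0 ≤ c := (birthProb_pos hγ₁ hγ₂.le 1).le
  have hc1 : c < 1 := birthProb_one_lt_one hγ₁ hγ₂
  have hlow : ∀ᵐ q ∂P, ∃ᶠ t in atTop, bdCocycle γ₁ γ₂ q (t + 1) x ≤ M := by
    filter_upwards [ae_eventually_four_mul_card_filter_lt_le hIndep hUnif
      (birthProb_pos hγ₁ hγ₂.le M).le hM] with q hq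
    have := frequently_bdCocycle_le hγ₁ hγ₂.le hq x
    rwa [← map_add_atTop_eq_nat 1, frequently_map] at this
  filter_upwards [ae_exists_mem_inter_of_frequently noiseFiltration
      (A := fun t => {q | bdCocycle γ₁ γ₂ q (t + 1) x ≤ M}) (B := fun t => largeRun c (t + 1) L)
      (pow_pos (sub_pos.2 hc1) L)
      (fun t => measurableSet_le (measurable_bdCocycle_succ t x) measurable_const)
      (fun t => le_iSup (fun n => noiseFiltration n) (t + 1 + L) _
        (measurableSet_largeRun fun j hj => measurable_eval_noiseFiltration (by omega)))
      (fun t => indep_largeRun_noiseFiltration hIndep c t L)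
      (fun t => (measureReal_largeRun hIndep hUnif hc0 hc1.le (t + 1) L).ge) hlow,
    ae_forall_lt_one hUnif] with q ⟨t, hlowt, hrun⟩ hq
  have hxM : bdCocycle γ₁ γ₂ q (t + 1) x ≤ M := hlowt
  have hgap := bdCocycle_le_bdCocycle hγ₁ hγ₂.le hq hxy hpar (t + 1)
  refine ⟨t + 1 + L, fun n hn => bdCocycle_eq_of_le ?_ hn⟩
  exact bdCocycle_add_eq_of_mem_largeRun hγ₁ hγ₂.le hq hpar hrun (by omega) (by omega)

end BirthDeath

/-- Partial synchronization of the embedded birth-death chain with respect to the parity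
partition `{W₀, W₁}` of `ℕ`: if the initial states `x` and `y` have the same parity (both in
`W₀`, the even numbers, or both in `W₁`, the odd numbers), then for almost every noise
realization `q` the two trajectories coincide from some time `n₀` on. -/
theorem stmt4 (γ₁ γ₂ : ℝ) (hγ₁ : 0 < γ₁) (hγ₂ : 0 < γ₂)
    (P : Measure (ℕ → ℝ)) [IsProbabilityMeasure P]
    (hIndep : iIndepFun (fun n (q : ℕ → ℝ) => q n) P)
    (hUnif : ∀ n : ℕ, P.map (fun q => q n) = volume.restrict (Set.Icc (0 : ℝ) 1))
    (x y : ℕ) (hpar : x % 2 = y % 2) :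
    ∀ᵐ q ∂P, ∃ n₀ : ℕ, ∀ n ≥ n₀, bdCocycle γ₁ γ₂ q n x = bdCocycle γ₁ γ₂ q n y := by
  rcases le_total x y with hxy | hyx
  · exact BirthDeath.ae_eventually_bdCocycle_eq_of_le hγ₁ hγ₂ hIndep hUnif hxy hpar
  · filter_upwards [BirthDeath.ae_eventually_bdCocycle_eq_of_le hγ₁ hγ₂ hIndep hUnif hyx hpar.symm]
      with q ⟨n₀, hn₀⟩
    exact ⟨n₀, fun n hn => (hn₀ n hn).symm⟩
end

section
/- If x, y ∈ ℕ have odd difference x − y, then for ℙ-a.e. q ∈ Q₊ the birth-death trajectories never coincide, i.e. φⁿ_q(x) ≠ φⁿ_q(y) for all n ∈ ℕ, and moreover there exists n₀ such that |φⁿ_q(x) − φⁿ_q(y)| = 1 for all n ≥ n₀. -/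
open MeasureTheory ProbabilityTheory Filter

/-! Driven by the same noise, two states either move in parallel or approach each other by `2`,
so their difference stays odd and its absolute value never increases; once it is at most `1` it
is `1` forever. Above a level `m₀` the birth probability is below `1/3`, so by the strong law of
large numbers the chain started at `y` falls below `m₀` infinitely often, and then the chain
started at `x` is below `m₀ + max x y`. From any such time, a run of `m₀ + max x y` noise values
`≥ γ₁/(γ₁+γ₂)` drives both chains into `{0, 1}`; this run has a fixed positive probability and is
independent of the past, so Lévy's 0-1 law shows that almost surely the distance reaches `1`. -/

open scoped Topology

noncomputable def birthProb (γ₁ γ₂ : ℝ) (x : ℕ) : ℝ :=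
  γ₁ / (γ₁ + γ₂ * x)

noncomputable def signWalk (p : ℝ) (q : ℕ → ℝ) (n : ℕ) : ℝ :=
  ∑ i ∈ Finset.range n, if q i < p then 1 else -1

section Dynamics

variable {γ₁ γ₂ : ℝ}

lemma birthProb_zero (hγ₁ : γ₁ ≠ 0) : birthProb γ₁ γ₂ 0 = 1 := by
  simp [birthProb, hγ₁]

lemma birthProb_antitone (hγ₁ : 0 < γ₁) (hγ₂ : 0 ≤ γ₂) : Antitone (birthProb γ₁ γ₂) := by
  intro a b hab
  have hab' : (a : ℝ) ≤ b := by exact_mod_cast hab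
  exact div_le_div_of_nonneg_left hγ₁.le (by positivity) (by nlinarith)

lemma tendsto_birthProb_atTop (hγ₂ : 0 < γ₂) : Tendsto (birthProb γ₁ γ₂) atTop (𝓝 0) :=
  tendsto_const_nhds.div_atTop <| tendsto_atTop_add_const_left _ _ <|
    tendsto_natCast_atTop_atTop.const_mul_atTop hγ₂

lemma pos_of_birthProb_lt_one (hγ₁ : γ₁ ≠ 0) {x : ℕ} (hx : birthProb γ₁ γ₂ x < 1) : 0 < x := by
  rcases Nat.eq_zero_or_pos x with rfl | hx0
  · exact absurd hx (by simp [birthProb_zero hγ₁])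
  · exact hx0

lemma birthProb_lt_one (hγ₁ : 0 < γ₁) (hγ₂ : 0 < γ₂) {x : ℕ} (hx : 0 < x) :
    birthProb γ₁ γ₂ x < 1 :=
  (div_lt_one (by positivity)).2 (lt_add_of_pos_right _ (by positivity))

lemma bdStep_of_lt {q : ℝ} {x : ℕ} (h : q < birthProb γ₁ γ₂ x) : bdStep γ₁ γ₂ q x = x + 1 :=
  if_pos h

lemma bdStep_of_le {q : ℝ} {x : ℕ} (h : birthProb γ₁ γ₂ x ≤ q) : bdStep γ₁ γ₂ q x = x - 1 :=
  if_neg h.not_gt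

lemma bdCocycle_succ (q : ℕ → ℝ) (n x : ℕ) :
    bdCocycle γ₁ γ₂ q (n + 1) x = bdStep γ₁ γ₂ (q n) (bdCocycle γ₁ γ₂ q n x) :=
  rfl

lemma bdStep_sub_bdStep (hγ₁ : 0 < γ₁) (hγ₂ : 0 ≤ γ₂) {q : ℝ} (hq : q < 1) {a b : ℕ}
    (hab : b ≤ a) :
    (bdStep γ₁ γ₂ q a : ℤ) - bdStep γ₁ γ₂ q b = a - b ∨
      b < a ∧ (bdStep γ₁ γ₂ q a : ℤ) - bdStep γ₁ γ₂ q b = a - b - 2 := by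
  rcases lt_or_ge q (birthProb γ₁ γ₂ a) with ha | ha
  · have hb := ha.trans_le (birthProb_antitone hγ₁ hγ₂ hab)
    left
    rw [bdStep_of_lt ha, bdStep_of_lt hb]
    omega
  have ha0 := pos_of_birthProb_lt_one hγ₁.ne' (ha.trans_lt hq)
  rw [bdStep_of_le ha]
  rcases lt_or_ge q (birthProb γ₁ γ₂ b) with hb | hb
  · have hba : b < a := lt_of_le_of_ne hab (by rintro rfl; exact ha.not_gt hb)
    right
    rw [bdStep_of_lt hb]
    omega
  · have hb0 := pos_of_birthProb_lt_one hγ₁.ne' (hb.trans_lt hq)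
    left
    rw [bdStep_of_le hb]
    omega

lemma bdStep_sub_bdStep_modEq (hγ₁ : 0 < γ₁) (hγ₂ : 0 ≤ γ₂) {q : ℝ} (hq : q < 1) (a b : ℕ) :
    (bdStep γ₁ γ₂ q a : ℤ) - bdStep γ₁ γ₂ q b ≡ a - b [ZMOD 2] := by
  wlog hab : b ≤ a generalizing a b
  · simpa using (this b a (le_of_not_ge hab)).neg
  rcases bdStep_sub_bdStep hγ₁ hγ₂ hq hab with h | ⟨-, h⟩
  · rw [h]
  · rw [h, Int.ModEq]
    omega

lemma abs_bdStep_sub_bdStep_le (hγ₁ : 0 < γ₁) (hγ₂ : 0 ≤ γ₂) {q : ℝ} (hq : q < 1) (a b : ℕ) :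
    |(bdStep γ₁ γ₂ q a : ℤ) - bdStep γ₁ γ₂ q b| ≤ |(a : ℤ) - b| := by
  wlog hab : b ≤ a generalizing a b
  · rw [abs_sub_comm, abs_sub_comm (a : ℤ)]
    exact this b a (le_of_not_ge hab)
  rw [abs_of_nonneg (sub_nonneg.2 (Nat.cast_le.2 hab)), abs_le]
  rcases bdStep_sub_bdStep hγ₁ hγ₂ hq hab with h | ⟨hba, h⟩ <;> omega

variable {q : ℕ → ℝ}

lemma odd_bdCocycle_sub (hγ₁ : 0 < γ₁) (hγ₂ : 0 ≤ γ₂) (hq : ∀ n, q n < 1) {x y : ℕ}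
    (hodd : Odd ((x : ℤ) - y)) (n : ℕ) :
    Odd ((bdCocycle γ₁ γ₂ q n x : ℤ) - bdCocycle γ₁ γ₂ q n y) := by
  have hmod : (bdCocycle γ₁ γ₂ q n x : ℤ) - bdCocycle γ₁ γ₂ q n y ≡ x - y [ZMOD 2] := by
    induction n with
    | zero => rfl
    | succ n ih => exact (bdStep_sub_bdStep_modEq hγ₁ hγ₂ (hq n) _ _).trans ih
  rw [Int.odd_iff] at hodd ⊢
  exact hmod.eq.trans hodd

lemma antitone_abs_bdCocycle_sub (hγ₁ : 0 < γ₁) (hγ₂ : 0 ≤ γ₂) (hq : ∀ n, q n < 1) (x y : ℕ) :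
    Antitone fun n => |(bdCocycle γ₁ γ₂ q n x : ℤ) - bdCocycle γ₁ γ₂ q n y| :=
  antitone_nat_of_succ_le fun n => abs_bdStep_sub_bdStep_le hγ₁ hγ₂ (hq n) _ _

lemma abs_bdCocycle_sub_eq_one (hγ₁ : 0 < γ₁) (hγ₂ : 0 ≤ γ₂) (hq : ∀ n, q n < 1) {x y : ℕ}
    (hodd : Odd ((x : ℤ) - y)) {n : ℕ}
    (hn : |(bdCocycle γ₁ γ₂ q n x : ℤ) - bdCocycle γ₁ γ₂ q n y| ≤ 1) {k : ℕ} (hk : n ≤ k) :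
    |(bdCocycle γ₁ γ₂ q k x : ℤ) - bdCocycle γ₁ γ₂ q k y| = 1 := by
  refine le_antisymm ((antitone_abs_bdCocycle_sub hγ₁ hγ₂ hq x y hk).trans hn) ?_
  obtain ⟨m, hm⟩ := odd_bdCocycle_sub hγ₁ hγ₂ hq hodd k
  rw [hm]
  exact Int.one_le_abs (by omega)

lemma bdStep_le_max_pred (hγ₁ : 0 < γ₁) (hγ₂ : 0 ≤ γ₂) {r : ℝ} (hr : birthProb γ₁ γ₂ 1 ≤ r)
    (hr₁ : r < 1) (v : ℕ) : bdStep γ₁ γ₂ r v ≤ max (v - 1) 1 := by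
  rcases Nat.eq_zero_or_pos v with rfl | hv
  · rw [bdStep_of_lt (by rwa [birthProb_zero hγ₁.ne'])]
    simp
  · rw [bdStep_of_le ((birthProb_antitone hγ₁ hγ₂ hv).trans hr)]
    exact le_max_left _ _

lemma bdCocycle_add_le_max (hγ₁ : 0 < γ₁) (hγ₂ : 0 ≤ γ₂) (hq : ∀ n, q n < 1) {n k : ℕ}
    (hrun : ∀ j ∈ Finset.Ico n (n + k), birthProb γ₁ γ₂ 1 ≤ q j) (z : ℕ) :
    bdCocycle γ₁ γ₂ q (n + k) z ≤ max (bdCocycle γ₁ γ₂ q n z - k) 1 := by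
  induction k with
  | zero => exact le_max_left _ _
  | succ k ih =>
    have ih := ih fun j hj => hrun j (Finset.Ico_subset_Ico_right (by omega) hj)
    have hstep := bdStep_le_max_pred hγ₁ hγ₂ (hrun (n + k) (by simp)) (hq (n + k))
      (bdCocycle γ₁ γ₂ q (n + k) z)
    rw [← add_assoc, bdCocycle_succ]
    omega

lemma bdCocycle_le_add_max (hγ₁ : 0 < γ₁) (hγ₂ : 0 ≤ γ₂) (hq : ∀ n, q n < 1) (x y n : ℕ) :
    bdCocycle γ₁ γ₂ q n x ≤ bdCocycle γ₁ γ₂ q n y + max x y := by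
  have hn : (bdCocycle γ₁ γ₂ q n x : ℤ) - bdCocycle γ₁ γ₂ q n y ≤ |(x : ℤ) - y| :=
    (le_abs_self _).trans (antitone_abs_bdCocycle_sub hγ₁ hγ₂ hq x y (Nat.zero_le n))
  have hxy : |(x : ℤ) - y| ≤ max x y := abs_sub_le_iff.2 ⟨by omega, by omega⟩
  omega

lemma abs_bdCocycle_sub_le_one_of_run (hγ₁ : 0 < γ₁) (hγ₂ : 0 ≤ γ₂) (hq : ∀ n, q n < 1)
    {x y n m₀ : ℕ} (hy : bdCocycle γ₁ γ₂ q n y ≤ m₀)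
    (hrun : ∀ j ∈ Finset.Ico n (n + (m₀ + max x y)), birthProb γ₁ γ₂ 1 ≤ q j) :
    |(bdCocycle γ₁ γ₂ q (n + (m₀ + max x y)) x : ℤ) -
      bdCocycle γ₁ γ₂ q (n + (m₀ + max x y)) y| ≤ 1 := by
  have hx := bdCocycle_le_add_max hγ₁ hγ₂ hq x y n
  have hx' := bdCocycle_add_le_max hγ₁ hγ₂ hq hrun x
  have hy' := bdCocycle_add_le_max hγ₁ hγ₂ hq hrun y
  rw [abs_le]
  omega

lemma bdStep_le_add_ite (hγ₁ : γ₁ ≠ 0) {p r : ℝ} (hp : p < 1) {v : ℕ}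
    (hv : birthProb γ₁ γ₂ v ≤ p) :
    (bdStep γ₁ γ₂ r v : ℝ) ≤ v + if r < p then 1 else -1 := by
  rcases lt_or_ge r (birthProb γ₁ γ₂ v) with hr | hr
  · rw [bdStep_of_lt hr, if_pos (hr.trans_le hv)]
    push_cast
    rfl
  · have hv0 := pos_of_birthProb_lt_one hγ₁ (hv.trans_lt hp)
    rw [bdStep_of_le hr, Nat.cast_pred hv0]
    split_ifs <;> linarith

lemma bdCocycle_sub_signWalk_le (hγ₁ : 0 < γ₁) (hγ₂ : 0 ≤ γ₂) {p : ℝ} (hp : p < 1) {m₀ : ℕ}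
    (hm₀ : birthProb γ₁ γ₂ m₀ ≤ p) {y N : ℕ} (habove : ∀ n ≥ N, m₀ < bdCocycle γ₁ γ₂ q n y)
    (k : ℕ) :
    (bdCocycle γ₁ γ₂ q (N + k) y : ℝ) - signWalk p q (N + k) ≤
      bdCocycle γ₁ γ₂ q N y - signWalk p q N := by
  induction k with
  | zero => rfl
  | succ k ih =>
    have hv := (birthProb_antitone hγ₁ hγ₂ (habove (N + k) (by omega)).le).trans hm₀
    have hstep := bdStep_le_add_ite hγ₁.ne' (r := q (N + k)) hp hv
    rw [← add_assoc, bdCocycle_succ, signWalk, Finset.sum_range_succ]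
    rw [signWalk] at ih
    linarith

lemma frequently_bdCocycle_le (hγ₁ : 0 < γ₁) (hγ₂ : 0 ≤ γ₂) {p : ℝ} (hp : p < 1) {m₀ : ℕ}
    (hm₀ : birthProb γ₁ γ₂ m₀ ≤ p) (hwalk : Tendsto (signWalk p q) atTop atBot) (y : ℕ) :
    ∃ᶠ n in atTop, bdCocycle γ₁ γ₂ q n y ≤ m₀ := by
  refine frequently_atTop.2 fun N => ?_
  by_contra! habove
  obtain ⟨n, hn, hNn⟩ := ((hwalk.eventually_lt_atBot
    (signWalk p q N - bdCocycle γ₁ γ₂ q N y)).and (eventually_ge_atTop N)).exists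
  have hdom := bdCocycle_sub_signWalk_le hγ₁ hγ₂ hp hm₀ habove (n - N)
  rw [Nat.add_sub_cancel' hNn] at hdom
  have : (0 : ℝ) ≤ bdCocycle γ₁ γ₂ q n y := Nat.cast_nonneg _
  linarith

end Dynamics

lemma measurable_bdStep (γ₁ γ₂ : ℝ) : Measurable fun p : ℝ × ℕ => bdStep γ₁ γ₂ p.1 p.2 :=
  measurable_from_prod_countable_left fun _ => by
    simp only [bdStep]
    exact Measurable.ite (measurableSet_lt measurable_id measurable_const) measurable_const
      measurable_const

lemma measurable_bdCocycle (γ₁ γ₂ : ℝ) {m : MeasurableSpace (ℕ → ℝ)} {n : ℕ}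
    (hq : ∀ j < n, Measurable[m] fun q : ℕ → ℝ => q j) (z : ℕ) :
    Measurable[m] fun q => bdCocycle γ₁ γ₂ q n z := by
  induction n with
  | zero => exact measurable_const
  | succ n ih =>
    exact (measurable_bdStep γ₁ γ₂).comp
      ((hq n n.lt_succ_self).prodMk (ih fun j hj => hq j (hj.trans n.lt_succ_self)))

lemma measurableSet_exists_abs_bdCocycle_sub_le_one (γ₁ γ₂ : ℝ) (x y : ℕ) :
    MeasurableSet {q : ℕ → ℝ | ∃ n, |(bdCocycle γ₁ γ₂ q n x : ℤ) - bdCocycle γ₁ γ₂ q n y| ≤ 1} := by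
  have hmeas := fun n z => measurable_bdCocycle γ₁ γ₂ (n := n) (fun j _ => measurable_pi_apply j) z
  simp only [Set.ofPred_exists]
  exact MeasurableSet.iUnion fun n => ((hmeas n x).prodMk (hmeas n y))
    (Set.to_countable {p : ℕ × ℕ | |(p.1 : ℤ) - p.2| ≤ 1}).measurableSet

lemma tendsto_atBot_of_tendsto_div_natCast {u : ℕ → ℝ} {a : ℝ} (ha : a < 0)
    (h : Tendsto (fun n => u n / n) atTop (𝓝 a)) : Tendsto u atTop atBot := by
  refine (h.neg_mul_atTop ha tendsto_natCast_atTop_atTop).congr' ?_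
  filter_upwards [eventually_ne_atTop 0] with n hn
  field_simp

section Conditioning

variable {Ω : Type*} {m : MeasurableSpace Ω} {μ : Measure Ω} [IsFiniteMeasure μ]

/-- By Lévy's upward theorem `μ[1_A | ℱ n] → 1_A` a.e., so the conditional probabilities can
exceed `ε` infinitely often only on `A`. -/
theorem ae_mem_of_frequently_le_condExp {ℱ : Filtration ℕ m} {A : Set Ω}
    (hA : MeasurableSet[⨆ n, ℱ n] A) {ε : ℝ} (hε : 0 < ε)
    (h : ∀ᵐ ω ∂μ, ∃ᶠ n in atTop, ε ≤ μ[A.indicator 1 | ℱ n] ω) : ∀ᵐ ω ∂μ, ω ∈ A := by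
  have hint : Integrable (A.indicator (1 : Ω → ℝ)) μ :=
    (integrable_const 1).indicator (iSup_le ℱ.le _ hA)
  filter_upwards [hint.tendsto_ae_condExp (stronglyMeasurable_one.indicator hA), h]
    with ω hlim hfreq
  by_contra hω
  rw [Set.indicator_of_notMem hω] at hlim
  obtain ⟨n, hle, hlt⟩ := (hfreq.and_eventually (hlim.eventually_lt_const hε)).exists
  exact hle.not_gt hlt

theorem indicator_le_condExp_indicator {m₁ m₂ : MeasurableSpace Ω} (hm₁ : m₁ ≤ m) (hm₂ : m₂ ≤ m)
    (hind : Indep m₁ m₂ μ) {A B G : Set Ω} (hA : MeasurableSet[m] A) (hB : MeasurableSet[m₁] B)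
    (hG : MeasurableSet[m₂] G) (hGBA : (G ∩ B : Set Ω) ≤ᵐ[μ] A) :
    G.indicator (fun _ => μ.real B) ≤ᵐ[μ] μ[A.indicator 1 | m₂] := by
  have hBint : Integrable (B.indicator (1 : Ω → ℝ)) μ := (integrable_const 1).indicator (hm₁ _ hB)
  have hcondB : μ[B.indicator (1 : Ω → ℝ) | m₂] =ᵐ[μ] fun _ => μ.real B := by
    have := condExp_indep_eq (f := B.indicator (1 : Ω → ℝ)) hm₁ hm₂
      (stronglyMeasurable_one.indicator hB) hind
    rwa [integral_indicator_one (hm₁ _ hB)] at this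
  have hpull :
      μ[(G ∩ B).indicator (1 : Ω → ℝ) | m₂] =ᵐ[μ] G.indicator (μ[B.indicator 1 | m₂]) := by
    rw [← Set.indicator_indicator (f := (1 : Ω → ℝ))]
    exact condExp_indicator hBint hG
  have hmono : μ[(G ∩ B).indicator (1 : Ω → ℝ) | m₂] ≤ᵐ[μ] μ[A.indicator 1 | m₂] := by
    refine condExp_mono ((integrable_const 1).indicator ((hm₂ _ hG).inter (hm₁ _ hB)))
      ((integrable_const 1).indicator hA) ?_
    filter_upwards [hGBA] with ω hω
    exact Set.indicator_apply_le' (fun h => (Set.indicator_of_mem (hω h) _).ge)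
      fun _ => Set.indicator_nonneg (fun _ _ => zero_le_one) ω
  filter_upwards [hcondB, hpull, hmono] with ω hBω hGBω hle
  calc G.indicator (fun _ => μ.real B) ω = G.indicator (μ[B.indicator 1 | m₂]) ω := by
        by_cases hω : ω ∈ G <;> simp [hω, hBω]
    _ = μ[(G ∩ B).indicator 1 | m₂] ω := hGBω.symm
    _ ≤ μ[A.indicator 1 | m₂] ω := hle

end Conditioning

section Coordinates

noncomputable def coordFiltration : Filtration ℕ (MeasurableSpace.pi : MeasurableSpace (ℕ → ℝ)) :=
  Filtration.natural (fun n (q : ℕ → ℝ) => q n) fun n => (measurable_pi_apply n).stronglyMeasurable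

lemma measurable_coordFiltration {j n : ℕ} (h : j ≤ n) :
    Measurable[coordFiltration n] fun q : ℕ → ℝ => q j :=
  Measurable.of_comap_le <| le_iSup₂
    (f := fun i (_ : i ≤ n) => MeasurableSpace.comap (fun q : ℕ → ℝ => q i) inferInstance) j h

lemma iSup_coordFiltration :
    ⨆ n, coordFiltration n = (MeasurableSpace.pi : MeasurableSpace (ℕ → ℝ)) :=
  le_antisymm (iSup_le coordFiltration.le) <| iSup_le fun j =>
    (measurable_coordFiltration le_rfl).comap_le.trans (le_iSup (fun n => coordFiltration n) j)

variable {P : Measure (ℕ → ℝ)}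

lemma indep_iSup_comap_coordFiltration (hIndep : iIndepFun (fun n (q : ℕ → ℝ) => q n) P)
    (n : ℕ) :
    Indep (⨆ j ∈ Set.Ioi n, MeasurableSpace.comap (fun q : ℕ → ℝ => q j) inferInstance)
      (coordFiltration n) P :=
  indep_iSup_of_disjoint (fun j => (measurable_pi_apply j).comap_le) hIndep.iIndep
    (Set.Iic_disjoint_Ioi le_rfl).symm

lemma ae_forall_of_map_eq {ν : Measure ℝ} (hlaw : ∀ n, P.map (fun q => q n) = ν) {p : ℝ → Prop}
    (h : ∀ᵐ r ∂ν, p r) : ∀ᵐ q ∂P, ∀ n, p (q n) :=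
  ae_all_iff.2 fun n => ae_of_ae_map (measurable_pi_apply n).aemeasurable (by rwa [hlaw n])

lemma integral_ite_lt (ν : Measure ℝ) [IsProbabilityMeasure ν] (p : ℝ) :
    ∫ r, (if r < p then (1 : ℝ) else -1) ∂ν = 2 * ν.real (Set.Iio p) - 1 := by
  have : (fun r : ℝ => if r < p then (1 : ℝ) else -1) =
      fun r => 2 * (Set.Iio p).indicator 1 r - 1 := by
    ext r
    by_cases h : r < p <;> simp [h]
    norm_num
  rw [this, integral_sub, integral_const_mul, integral_indicator_one measurableSet_Iio]
  · simp
  · exact ((integrable_const 1).indicator measurableSet_Iio).const_mul 2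
  · exact integrable_const 1

theorem ae_tendsto_signWalk_atBot [IsProbabilityMeasure P]
    (hIndep : iIndepFun (fun n (q : ℕ → ℝ) => q n) P) {ν : Measure ℝ}
    (hlaw : ∀ n, P.map (fun q => q n) = ν) {p : ℝ} (hp : ν.real (Set.Iio p) < 1 / 2) :
    ∀ᵐ q ∂P, Tendsto (signWalk p q) atTop atBot := by
  have : IsProbabilityMeasure ν :=
    hlaw 0 ▸ Measure.isProbabilityMeasure_map (measurable_pi_apply 0).aemeasurable
  set g : ℝ → ℝ := fun r => if r < p then 1 else -1 with hg_def
  have hg : Measurable g := Measurable.ite measurableSet_Iio measurable_const measurable_const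
  have hident : ∀ i, IdentDistrib (fun q : ℕ → ℝ => g (q i)) (fun q => g (q 0)) P P := fun i =>
    IdentDistrib.comp ⟨(measurable_pi_apply i).aemeasurable, (measurable_pi_apply 0).aemeasurable,
      (hlaw i).trans (hlaw 0).symm⟩ hg
  have hint : Integrable (fun q : ℕ → ℝ => g (q 0)) P :=
    Integrable.of_bound (hg.comp (measurable_pi_apply 0)).aestronglyMeasurable 1
      (ae_of_all _ fun q => by simp only [hg_def]; split_ifs <;> simp)
  have hmean : ∫ q, g (q 0) ∂P = 2 * ν.real (Set.Iio p) - 1 := by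
    rw [← integral_ite_lt ν p, ← hlaw 0,
      integral_map (measurable_pi_apply 0).aemeasurable hg.aestronglyMeasurable]
  filter_upwards [strong_law_ae_real (fun i (q : ℕ → ℝ) => g (q i)) hint
    (fun i j hij => (hIndep.indepFun hij).comp hg hg) hident] with q hq
  rw [hmean] at hq
  exact tendsto_atBot_of_tendsto_div_natCast (by linarith) hq

theorem ae_mem_of_frequently_forall_Ico_mem [IsProbabilityMeasure P]
    (hIndep : iIndepFun (fun n (q : ℕ → ℝ) => q n) P) {ν : Measure ℝ}
    (hlaw : ∀ n, P.map (fun q => q n) = ν) {S : Set ℝ} (hS : MeasurableSet S) (hνS : ν S ≠ 0)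
    {A : Set (ℕ → ℝ)} (hA : MeasurableSet A) {G : ℕ → Set (ℕ → ℝ)}
    (hG : ∀ n, MeasurableSet[coordFiltration n] (G n)) (hfreq : ∀ᵐ q ∂P, ∃ᶠ n in atTop, q ∈ G n)
    (M : ℕ) (hGA : ∀ᵐ q ∂P, ∀ n, q ∈ G n →
      (∀ j ∈ Finset.Ico (n + 1) (n + 1 + M), q j ∈ S) → q ∈ A) :
    ∀ᵐ q ∂P, q ∈ A := by
  set B : ℕ → Set (ℕ → ℝ) := fun n =>
    ⋂ j ∈ Finset.Ico (n + 1) (n + 1 + M), (fun q => q j) ⁻¹' S with hB_def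
  have hBmeas : ∀ n, MeasurableSet[⨆ j ∈ Set.Ioi n,
      MeasurableSpace.comap (fun q : ℕ → ℝ => q j) inferInstance] (B n) := fun n =>
    Finset.measurableSet_biInter _ fun j hj => le_iSup₂
      (f := fun i (_ : i ∈ Set.Ioi n) => MeasurableSpace.comap (fun q : ℕ → ℝ => q i) inferInstance)
      j (by simp at hj; simp; omega) _ ⟨S, hS, rfl⟩
  have hPB : ∀ n, P (B n) = ν S ^ M := by
    intro n
    have hcoord : ∀ j, P ((fun q => q j) ⁻¹' S) = ν S := fun j => by
      rw [← Measure.map_apply (measurable_pi_apply j) hS, hlaw]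
    rw [hIndep.meas_biInter fun j _ => ⟨S, hS, rfl⟩, Finset.prod_congr rfl fun j _ => hcoord j]
    simp
  have hε : 0 < P.real (B 0) :=
    ENNReal.toReal_pos (by rw [hPB]; exact pow_ne_zero _ hνS) (measure_ne_top _ _)
  refine ae_mem_of_frequently_le_condExp (ℱ := coordFiltration)
    (by rw [iSup_coordFiltration]; exact hA) hε ?_
  have hbound : ∀ n, (G n).indicator (fun _ => P.real (B n)) ≤ᵐ[P]
      P[A.indicator 1 | coordFiltration n] := fun n =>
    indicator_le_condExp_indicator (iSup₂_le fun j _ => (measurable_pi_apply j).comap_le)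
      (coordFiltration.le n) (indep_iSup_comap_coordFiltration hIndep n) hA (hBmeas n) (hG n)
      (by filter_upwards [hGA] with q hq hGB using hq n hGB.1 (by simpa [hB_def] using hGB.2))
  filter_upwards [ae_all_iff.2 hbound, hfreq] with q hb hf
  refine hf.mono fun n hn => ?_
  simpa [Set.indicator_of_mem hn, measureReal_def, hPB] using hb n

end Coordinates

lemma ae_lt_one_restrict_Icc : ∀ᵐ r ∂(volume.restrict (Set.Icc (0 : ℝ) 1)), r < 1 := by
  filter_upwards [ae_restrict_mem measurableSet_Icc,
    ae_restrict_of_ae (Measure.ae_ne volume (1 : ℝ))] with r hr hr₁ using lt_of_le_of_ne hr.2 hr₁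

lemma restrict_Icc_Ici_ne_zero {c : ℝ} (hc : c < 1) :
    volume.restrict (Set.Icc (0 : ℝ) 1) (Set.Ici c) ≠ 0 := by
  rw [Measure.restrict_apply measurableSet_Ici]
  have hsub : Set.Ioo (max c 0) 1 ⊆ Set.Ici c ∩ Set.Icc 0 1 := fun r hr =>
    ⟨(le_max_left _ _).trans hr.1.le, (le_max_right _ _).trans hr.1.le, hr.2.le⟩
  have hpos : 0 < volume (Set.Ioo (max c 0) 1) := by simp [hc]
  exact (hpos.trans_le (measure_mono hsub)).ne'

lemma real_restrict_Icc_Iio_lt {p : ℝ} (hp : p < 1 / 2) :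
    (volume.restrict (Set.Icc (0 : ℝ) 1)).real (Set.Iio p) < 1 / 2 := by
  rw [measureReal_restrict_apply measurableSet_Iio]
  calc volume.real (Set.Iio p ∩ Set.Icc 0 1) ≤ volume.real (Set.Icc 0 p) :=
        measureReal_mono (fun r hr => ⟨hr.2.1, hr.1.le⟩) (by simp)
    _ < 1 / 2 := by
        rw [Real.volume_real_Icc]
        exact max_lt (by linarith) (by norm_num)

/-- If the initial states `x` and `y` have odd difference, then for almost every noise
realization the two birth-death trajectories never coincide, and moreover from some time `n₀`
on they oscillate at distance exactly `1` from each other. -/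
theorem stmt5 (γ₁ γ₂ : ℝ) (hγ₁ : 0 < γ₁) (hγ₂ : 0 < γ₂)
    (P : Measure (ℕ → ℝ)) [IsProbabilityMeasure P]
    (hIndep : iIndepFun (fun n (q : ℕ → ℝ) => q n) P)
    (hUnif : ∀ n : ℕ, P.map (fun q => q n) = volume.restrict (Set.Icc (0 : ℝ) 1))
    (x y : ℕ) (hodd : Odd ((x : ℤ) - (y : ℤ))) :
    ∀ᵐ q ∂P, (∀ n : ℕ, bdCocycle γ₁ γ₂ q n x ≠ bdCocycle γ₁ γ₂ q n y) ∧
      ∃ n₀ : ℕ, ∀ n ≥ n₀,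
        |(bdCocycle γ₁ γ₂ q n x : ℤ) - (bdCocycle γ₁ γ₂ q n y : ℤ)| = 1 := by
  obtain ⟨m₀, hm₀⟩ := ((tendsto_birthProb_atTop (γ₁ := γ₁) hγ₂).eventually
    (ge_mem_nhds (by norm_num : (0 : ℝ) < 1 / 3))).exists
  have hlt : ∀ᵐ q ∂P, ∀ n, q n < 1 := ae_forall_of_map_eq hUnif ae_lt_one_restrict_Icc
  have hrec : ∀ᵐ q ∂P, ∃ᶠ n in atTop, bdCocycle γ₁ γ₂ q (n + 1) y ≤ m₀ := by
    filter_upwards [ae_tendsto_signWalk_atBot hIndep hUnif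
      (real_restrict_Icc_Iio_lt (p := 1 / 3) (by norm_num))] with q hq
    refine (frequently_map (m := (· + 1)) (P := fun n => bdCocycle γ₁ γ₂ q n y ≤ m₀)).1 ?_
    rw [map_add_atTop_eq_nat]
    exact frequently_bdCocycle_le hγ₁ hγ₂.le (by norm_num) hm₀ hq y
  have hA : ∀ᵐ q ∂P,
      q ∈ {q | ∃ n, |(bdCocycle γ₁ γ₂ q n x : ℤ) - bdCocycle γ₁ γ₂ q n y| ≤ 1} := by
    refine ae_mem_of_frequently_forall_Ico_mem hIndep hUnif measurableSet_Ici
      (restrict_Icc_Ici_ne_zero (birthProb_lt_one hγ₁ hγ₂ one_pos))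
      (measurableSet_exists_abs_bdCocycle_sub_le_one γ₁ γ₂ x y)
      (fun n => measurable_bdCocycle γ₁ γ₂ (fun j hj => measurable_coordFiltration (by omega)) y
        measurableSet_Iic) hrec (m₀ + max x y) ?_
    filter_upwards [hlt] with q hq n hn hrun
    exact ⟨_, abs_bdCocycle_sub_le_one_of_run hγ₁ hγ₂.le hq hn hrun⟩
  filter_upwards [hlt, hA] with q hq ⟨n, hn⟩
  refine ⟨fun k heq => ?_, n, fun k hk => abs_bdCocycle_sub_eq_one hγ₁ hγ₂.le hq hodd hn hk⟩
  obtain ⟨m, hm⟩ := odd_bdCocycle_sub hγ₁ hγ₂.le hq hodd k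
  omega
end
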